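/- arXiv:2604.00970 — 5 statements merged into one kernel-verified Lean document; each statement's English description precedes it below -/
import Mathlib

section
/- With H as defined on E × E, for all x, z ∈ E with x ≠ z: H(1/x mod q^ℤ, 1/z mod q^ℤ) = H(x, z), i.e., H is invariant under simultaneous inversion of both arguments within the fundamental domain. -/
open MeasureTheory

/-- The fundamental domain `E = ∪_{i=0}^{m-1} p^i ℤ_p^×` of the Tate curve,
i.e. nonzero `p`-adic numbers with valuation in `[0, m)`. -/
def fundDomain (p : ℕ) [Fact p.Prime] (m : ℕ) : Set ℚ_[p] :=
  {x | x ≠ 0 ∧ 0 ≤ x.valuation ∧ x.valuation < m}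

/-- The kernel `H(z,x) = |x||z|/|x-z|^2 + (1/(p^m-1))(|x|/|z| + |z|/|x|)`. -/
noncomputable def Hker (p : ℕ) [Fact p.Prime] (m : ℕ) (z x : ℚ_[p]) : ℝ :=
  ‖x‖ * ‖z‖ / ‖x - z‖ ^ 2 + 1 / ((p : ℝ) ^ m - 1) * (‖x‖ / ‖z‖ + ‖z‖ / ‖x‖)

/-!
`H` depends only on `|x|`, `|z|` and `|x - z|`; it is invariant under the scaling
`(x, z) ↦ (t x, t z)` and under `(x, z) ↦ (1/x, 1/z)`. The representative of `1/x` in `E` is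
`1/x` when `|x| = 1` and `q/x` otherwise, so when `x` and `z` fall in the same case the claim is
these two invariances. In the mixed case `|x| = 1 > |z|`, the ultrametric inequality gives
`|x - z| = 1 = |1/x - q/z|`, so `H(x, z) = b + (b + 1/b)/(p^m - 1)` with `b = |z|`, and this is
invariant under `b ↦ 1/(p^m b) = |q/z|`.
-/

section

variable (p : ℕ) [Fact p.Prime] (m : ℕ)

lemma natCast_p_ne_zero : (p : ℚ_[p]) ≠ 0 :=
  Nat.cast_ne_zero.mpr (Fact.out : p.Prime).ne_zero

lemma one_lt_natCast_p : (1 : ℝ) < p :=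
  Nat.one_lt_cast.mpr (Fact.out : p.Prime).one_lt

lemma Hker_comm (z x : ℚ_[p]) : Hker p m z x = Hker p m x z := by
  rw [Hker, Hker, norm_sub_rev]
  ring

lemma Hker_mul_mul_right (z x : ℚ_[p]) {t : ℚ_[p]} (ht : t ≠ 0) :
    Hker p m (z * t) (x * t) = Hker p m z x := by
  have ht' : ‖t‖ ≠ 0 := norm_ne_zero_iff.mpr ht
  simp only [Hker, ← sub_mul, norm_mul, mul_div_mul_right _ _ ht']
  congr 1
  rw [mul_pow, mul_mul_mul_comm, ← sq, mul_div_mul_right _ _ (pow_ne_zero 2 ht')]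

lemma Hker_inv_inv {z x : ℚ_[p]} (hz : z ≠ 0) (hx : x ≠ 0) :
    Hker p m z⁻¹ x⁻¹ = Hker p m z x := by
  have hsub : x⁻¹ - z⁻¹ = (z - x) * (x * z)⁻¹ := by
    field_simp
  have hx' : ‖x‖ ≠ 0 := norm_ne_zero_iff.mpr hx
  have hz' : ‖z‖ ≠ 0 := norm_ne_zero_iff.mpr hz
  simp only [Hker, hsub, norm_mul, norm_inv, norm_sub_rev z x]
  field_simp
  ring

lemma Hker_of_norm_eq_one_of_norm_lt_one {z x : ℚ_[p]} (hz : ‖z‖ = 1) (hx : ‖x‖ < 1) :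
    Hker p m z x = ‖x‖ + 1 / ((p : ℝ) ^ m - 1) * (‖x‖⁻¹ + ‖x‖) := by
  have hsub : ‖x - z‖ = 1 := by
    rw [norm_sub_rev, sub_eq_add_neg, IsUltrametricDist.norm_add_eq_max_of_norm_ne_norm] <;>
      simp [hz, hx.le, hx.ne']
  rw [Hker, hz, hsub]
  ring

lemma valuation_inv_mul_p_zpow {x : ℚ_[p]} (hx : x ≠ 0) (n : ℤ) :
    (x⁻¹ * (p : ℚ_[p]) ^ n).valuation = n - x.valuation := by
  rw [Padic.valuation_mul (inv_ne_zero hx) (zpow_ne_zero n (natCast_p_ne_zero p)),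
    Padic.valuation_inv, Padic.valuation_zpow, Padic.valuation_p]
  ring

lemma fundDomain_inv_mul_zpow_cases {x : ℚ_[p]} (hx : x ∈ fundDomain p m) {k : ℤ}
    (hk : x⁻¹ * (p : ℚ_[p]) ^ ((m : ℤ) * k) ∈ fundDomain p m) :
    (k = 0 ∧ x.valuation = 0) ∨ (k = 1 ∧ 0 < x.valuation) := by
  obtain ⟨hx0, hv0, hvm⟩ := hx
  obtain ⟨-, hk0, hkm⟩ := hk
  rw [valuation_inv_mul_p_zpow p hx0] at hk0 hkm
  have hk_nonneg : 0 ≤ k := by nlinarith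
  have hk_lt_two : k < 2 := by nlinarith
  interval_cases k <;> omega

lemma norm_lt_one_of_valuation_pos {x : ℚ_[p]} (hx : x ≠ 0) (hv : 0 < x.valuation) :
    ‖x‖ < 1 := by
  rw [Padic.norm_eq_zpow_neg_valuation hx]
  exact zpow_lt_one_of_neg₀ (one_lt_natCast_p p) (neg_neg_of_pos hv)

lemma Hker_inv_inv_mul_p_pow {z x : ℚ_[p]} (hz : z ≠ 0) (hzv : z.valuation = 0) (hx : x ≠ 0)
    (hxv : 0 < x.valuation) (hxm : x.valuation < m) :
    Hker p m z⁻¹ (x⁻¹ * (p : ℚ_[p]) ^ (m : ℤ)) = Hker p m z x := by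
  have hx' : x⁻¹ * (p : ℚ_[p]) ^ (m : ℤ) ≠ 0 :=
    mul_ne_zero (inv_ne_zero hx) (zpow_ne_zero _ (natCast_p_ne_zero p))
  have hnorm_z : ‖z‖ = 1 := by simp [Padic.norm_eq_zpow_neg_valuation hz, hzv]
  have hnorm_x' : ‖x⁻¹ * (p : ℚ_[p]) ^ (m : ℤ)‖ = (‖x‖ * (p : ℝ) ^ m)⁻¹ := by
    rw [norm_mul, norm_inv, Padic.norm_p_zpow, zpow_neg, zpow_natCast, mul_inv]
  have hx'v : 0 < (x⁻¹ * (p : ℚ_[p]) ^ (m : ℤ)).valuation := by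
    rw [valuation_inv_mul_p_zpow p hx]
    omega
  rw [Hker_of_norm_eq_one_of_norm_lt_one p m hnorm_z (norm_lt_one_of_valuation_pos p hx hxv),
    Hker_of_norm_eq_one_of_norm_lt_one p m (by simpa using hnorm_z)
      (norm_lt_one_of_valuation_pos p hx' hx'v), hnorm_x']
  have hnorm_x : ‖x‖ ≠ 0 := norm_ne_zero_iff.mpr hx
  have hp : (p : ℝ) ≠ 0 := (zero_lt_one.trans (one_lt_natCast_p p)).ne'
  have hpm : (p : ℝ) ^ m - 1 ≠ 0 :=
    sub_ne_zero.mpr (one_lt_pow₀ (one_lt_natCast_p p) (by omega)).ne'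
  field_simp
  ring

end

theorem stmt_2_general (p : ℕ) [Fact p.Prime] (m : ℕ)
    (x z x' z' : ℚ_[p])
    (hx : x ∈ fundDomain p m) (hz : z ∈ fundDomain p m)
    (hx' : x' ∈ fundDomain p m) (hz' : z' ∈ fundDomain p m)
    (hx'rep : ∃ k : ℤ, x' = x⁻¹ * (p : ℚ_[p]) ^ ((m : ℤ) * k))
    (hz'rep : ∃ k : ℤ, z' = z⁻¹ * (p : ℚ_[p]) ^ ((m : ℤ) * k)) :
    Hker p m x' z' = Hker p m x z := by
  obtain ⟨k, rfl⟩ := hx'rep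
  obtain ⟨l, rfl⟩ := hz'rep
  have same_exponent (n : ℤ) :
      Hker p m (x⁻¹ * (p : ℚ_[p]) ^ n) (z⁻¹ * (p : ℚ_[p]) ^ n) = Hker p m x z := by
    rw [Hker_mul_mul_right p m _ _ (zpow_ne_zero n (natCast_p_ne_zero p)),
      Hker_inv_inv p m hx.1 hz.1]
  rcases fundDomain_inv_mul_zpow_cases p m hx hx' with ⟨rfl, hxv⟩ | ⟨rfl, hxv⟩ <;>
    rcases fundDomain_inv_mul_zpow_cases p m hz hz' with ⟨rfl, hzv⟩ | ⟨rfl, hzv⟩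
  · exact same_exponent _
  · simpa using Hker_inv_inv_mul_p_pow p m hx.1 hxv hz.1 hzv hz.2.2
  · rw [Hker_comm, Hker_comm p m x]
    simpa using Hker_inv_inv_mul_p_pow p m hz.1 hzv hx.1 hxv hx.2.2
  · exact same_exponent _

/-- `H` is invariant under simultaneous inversion of both arguments
within the fundamental domain: `H(1/x mod q^ℤ, 1/z mod q^ℤ) = H(x,z)`. -/
theorem stmt_2 (p : ℕ) [Fact p.Prime] (m : ℕ) (hm : 1 ≤ m)
    (x z x' z' : ℚ_[p])
    (hx : x ∈ fundDomain p m) (hz : z ∈ fundDomain p m) (hxz : x ≠ z)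
    (hx' : x' ∈ fundDomain p m) (hz' : z' ∈ fundDomain p m)
    (hx'rep : ∃ k : ℤ, x' = x⁻¹ * (p : ℚ_[p]) ^ ((m : ℤ) * k))
    (hz'rep : ∃ k : ℤ, z' = z⁻¹ * (p : ℚ_[p]) ^ ((m : ℤ) * k)) :
    Hker p m x' z' = Hker p m x z :=
  stmt_2_general p m x z x' z' hx hz hx' hz' hx'rep hz'rep
end

section
/- For a prime p, integer m ≥ 2, and integer k with 0 < k < m, one has (p^{m−k}+p^k)/(p^m−1)·(1/(p−1) − (p−1)/p·(k(k−m)/(2m))) + (p−1)/p·Σ_{u=1, u≠k}^{m−1} (p^{m−|k−u|}+p^{|k−u|})/(p^m−1)·(u(u−m)/(2m) − k(k−m)/(2m)) = (p+1)/(m(p−1)²). -/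
/-!
With `q = p` and `Q = q ^ m - 1`, the summand at `u = k` vanishes and the missing `u = 0` term
accounts for the `k (k - m)` part of the first summand, so the left side equals
`(q ^ (m - k) + q ^ k) / (Q (q - 1)) + (q - 1) / q * S / (2 m Q)` with
`S = ∑_{u < m} (q ^ (m - |k - u|) + q ^ |k - u|) (u (u - m) - k (k - m))`.
Splitting `S` at `u = k`, each half becomes a sum of `q ^ j` times a quadratic in `j` (after
reversing the order of summation where the exponent decreases), and these have closed forms.
The result `S = 2q ((q + 1) Q - m (q - 1) (q ^ (m - k) + q ^ k)) / (q - 1) ^ 3` makes the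
`q ^ (m - k) + q ^ k` terms cancel.
-/

open Finset

section
variable {K : Type*} [Field K]

theorem sum_range_pow_mul_quadratic {x : K} (hx : x ≠ 1) (a b c : K) (N : ℕ) :
    ∑ j ∈ range N, x ^ j * (a + b * j + c * j ^ 2) =
      (a * (x ^ N - 1) * (x - 1) ^ 2
        + b * ((N - 1) * x ^ (N + 1) - N * x ^ N + x) * (x - 1)
        + c * ((N - 1) ^ 2 * x ^ (N + 2) - (2 * N ^ 2 - 2 * N - 1) * x ^ (N + 1)
            + N ^ 2 * x ^ N - x ^ 2 - x)) / (x - 1) ^ 3 := by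
  have hx1 : x - 1 ≠ 0 := sub_ne_zero.2 hx
  induction N with
  | zero => simp
  | succ n ih =>
    rw [sum_range_succ, ih]
    push_cast
    field_simp
    ring

theorem sum_range_reflect_pow_mul_quadratic (x a b c : K) (N : ℕ) :
    ∑ j ∈ range N, x ^ (N - 1 - j) * (a + b * j + c * j ^ 2) =
      ∑ j ∈ range N, x ^ j *
        ((a + b * (N - 1) + c * (N - 1) ^ 2) + -(b + 2 * c * (N - 1)) * j + c * j ^ 2) := by
  rw [← sum_range_reflect]
  refine sum_congr rfl fun j hj => ?_
  have hjN : j < N := mem_range.1 hj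
  rw [Nat.sub_sub_self (by omega), Nat.cast_sub (by omega), Nat.cast_sub (by omega)]
  push_cast
  ring

theorem sum_range_pow_natAbs_mul (q : K) (hq : q ≠ 1) {m k : ℕ} (hkm : k < m) :
    ∑ u ∈ range m, (q ^ (m - ((k : ℤ) - u).natAbs) + q ^ ((k : ℤ) - u).natAbs) *
        ((u : K) * (u - m) - k * (k - m)) =
      2 * q * ((q + 1) * (q ^ m - 1) - m * (q - 1) * (q ^ (m - k) + q ^ k)) / (q - 1) ^ 3 := by
  obtain ⟨t, rfl⟩ : ∃ t, m = k + 1 + t := ⟨m - k - 1, by omega⟩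
  have below : ∀ u ∈ range (k + 1),
      (q ^ (k + 1 + t - ((k : ℤ) - u).natAbs) + q ^ ((k : ℤ) - u).natAbs) *
        ((u : K) * (u - (k + 1 + t : ℕ)) - k * (k - (k + 1 + t : ℕ))) =
      q ^ (t + 1) * (q ^ u * (k * (t + 1) + -(k + 1 + t) * u + 1 * u ^ 2)) +
        q ^ (k + 1 - 1 - u) * (k * (t + 1) + -(k + 1 + t) * u + 1 * u ^ 2) := by
    intro u hu
    have huk : u ≤ k := Nat.lt_succ_iff.1 (mem_range.1 hu)
    rw [show ((k : ℤ) - u).natAbs = k - u by omega, show k + 1 + t - (k - u) = t + 1 + u by omega,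
      show k + 1 - 1 - u = k - u by omega, pow_add]
    push_cast
    ring
  have above : ∀ j ∈ range t,
      (q ^ (k + 1 + t - ((k : ℤ) - (k + 1 + j : ℕ)).natAbs) +
          q ^ ((k : ℤ) - (k + 1 + j : ℕ)).natAbs) *
        (((k + 1 + j : ℕ) : K) * ((k + 1 + j : ℕ) - (k + 1 + t : ℕ)) - k * (k - (k + 1 + t : ℕ))) =
      q ^ (k + 1) * (q ^ (t - 1 - j) * ((k - t) + (k + 1 - t) * j + 1 * j ^ 2)) +
        q * (q ^ j * ((k - t) + (k + 1 - t) * j + 1 * j ^ 2)) := by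
    intro j hj
    have hjt : j < t := mem_range.1 hj
    rw [show ((k : ℤ) - (k + 1 + j : ℕ)).natAbs = j + 1 by omega,
      show k + 1 + t - (j + 1) = k + 1 + (t - 1 - j) by omega, pow_add, pow_succ]
    push_cast
    ring
  rw [sum_range_add, sum_congr rfl below, sum_congr rfl above, sum_add_distrib, sum_add_distrib,
    ← mul_sum, ← mul_sum, ← mul_sum, sum_range_reflect_pow_mul_quadratic,
    sum_range_reflect_pow_mul_quadratic, sum_range_pow_mul_quadratic hq,
    sum_range_pow_mul_quadratic hq, sum_range_pow_mul_quadratic hq, sum_range_pow_mul_quadratic hq,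
    show k + 1 + t - k = t + 1 by omega]
  have hq1 : q - 1 ≠ 0 := sub_ne_zero.2 hq
  push_cast
  field_simp
  ring

end

theorem stmt_6_general (p : ℕ) (hp : p.Prime) (m k : ℕ) (hkm : k < m) :
    ((p : ℝ) ^ (m - k) + (p : ℝ) ^ k) / ((p : ℝ) ^ m - 1) *
        (1 / ((p : ℝ) - 1) -
          ((p : ℝ) - 1) / p * ((k : ℝ) * ((k : ℝ) - m) / (2 * m))) +
      ((p : ℝ) - 1) / p *
        ∑ u ∈ (Finset.Icc 1 (m - 1)).erase k,
          ((p : ℝ) ^ (m - ((k : ℤ) - u).natAbs) + (p : ℝ) ^ ((k : ℤ) - u).natAbs) /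
              ((p : ℝ) ^ m - 1) *
            ((u : ℝ) * ((u : ℝ) - m) / (2 * m) - (k : ℝ) * ((k : ℝ) - m) / (2 * m))
    = ((p : ℝ) + 1) / (m * ((p : ℝ) - 1) ^ 2) := by
  set q : ℝ := (p : ℝ)
  have hq : 1 < q := Nat.one_lt_cast.2 hp.one_lt
  have hqm : q ^ m - 1 ≠ 0 := (sub_pos.2 (one_lt_pow₀ hq (by omega))).ne'
  have hm : (m : ℝ) ≠ 0 := by norm_cast; omega
  have hq1 : q - 1 ≠ 0 := (sub_pos.2 hq).ne'
  set G : ℕ → ℝ := fun u => (q ^ (m - ((k : ℤ) - u).natAbs) + q ^ ((k : ℤ) - u).natAbs) /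
    (q ^ m - 1) * ((u : ℝ) * ((u : ℝ) - m) / (2 * m) - (k : ℝ) * ((k : ℝ) - m) / (2 * m))
  have hrange : range m = insert 0 (Icc 1 (m - 1)) := by
    ext u
    simp only [mem_range, mem_insert, mem_Icc]
    omega
  have hsplit : ∑ u ∈ (Icc 1 (m - 1)).erase k, G u = ∑ u ∈ range m, G u - G 0 := by
    rw [sum_erase _ (by simp [G]), hrange, sum_insert (by simp), add_sub_cancel_left]
  have hsum : ∑ u ∈ range m, G u =
      (∑ u ∈ range m, (q ^ (m - ((k : ℤ) - u).natAbs) + q ^ ((k : ℤ) - u).natAbs) *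
        ((u : ℝ) * (u - m) - k * (k - m))) / ((q ^ m - 1) * (2 * m)) := by
    rw [sum_div]
    refine sum_congr rfl fun u _ => ?_
    simp only [G]
    field_simp
  rw [hsplit, hsum, sum_range_pow_natAbs_mul q hq.ne' hkm]
  simp only [G, Nat.cast_zero, sub_zero, Int.natAbs_natCast]
  field_simp
  ring

/-- Case 2 computation: for `0 < k < m`,
`I₀ + Σ_{u=1, u≠k}^{m-1} I_u = (p+1)/(m(p-1)²)`. -/
theorem stmt_6 (p : ℕ) (hp : p.Prime) (m k : ℕ) (hm : 2 ≤ m) (hk0 : 0 < k) (hkm : k < m) :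
    ((p : ℝ) ^ (m - k) + (p : ℝ) ^ k) / ((p : ℝ) ^ m - 1) *
        (1 / ((p : ℝ) - 1) -
          ((p : ℝ) - 1) / p * ((k : ℝ) * ((k : ℝ) - m) / (2 * m))) +
      ((p : ℝ) - 1) / p *
        ∑ u ∈ (Finset.Icc 1 (m - 1)).erase k,
          ((p : ℝ) ^ (m - ((k : ℤ) - u).natAbs) + (p : ℝ) ^ ((k : ℤ) - u).natAbs) /
              ((p : ℝ) ^ m - 1) *
            ((u : ℝ) * ((u : ℝ) - m) / (2 * m) - (k : ℝ) * ((k : ℝ) - m) / (2 * m))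
    = ((p : ℝ) + 1) / (m * ((p : ℝ) - 1) ^ 2) :=
  stmt_6_general p hp m k hkm
end

section
/- For ω an m-th root of unity with ω ≠ 1, the finite sum Σ_{u=1}^{m−1} (p^u + p^{m−u})/(p^m − 1)·(ω^u − 1) equals (1/(pω−1) + 1/(pω^{−1}−1) − 2/(p−1)). -/
/-! Since `ω ^ m = 1`, the geometric sum `∑_{u<m} (p x)^u` equals `(p^m - 1)/(p x - 1)` for
`x ∈ {1, ω, ω⁻¹}`. Hence `(p^m - 1)` times the right-hand side is
`∑_{u ≤ m} p^u (ω^u - 1) + ∑_{u ≤ m} p^u (ω^{-u} - 1)`; reflecting `u ↦ m - u` in the second sum and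
dropping the vanishing terms `u = 0` and `u = m` gives `(p^m - 1)` times the left-hand side. -/

open Finset

section RootOfUnitySums

variable {K : Type*} [Field K] {m : ℕ}

theorem sum_range_succ_pow_mul_sub_one {x : K} (q : K) (hx : x ^ m = 1) (hqx : q * x ≠ 1)
    (hq : q ≠ 1) :
    ∑ u ∈ range (m + 1), q ^ u * (x ^ u - 1) = (q ^ m - 1) * (1 / (q * x - 1) - 1 / (q - 1)) := by
  have hqx' : q * x - 1 ≠ 0 := sub_ne_zero.2 hqx
  have hq' : q - 1 ≠ 0 := sub_ne_zero.2 hq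
  have hgeom : ∑ u ∈ range m, (q * x) ^ u = (q ^ m - 1) / (q * x - 1) := by
    rw [geom_sum_eq hqx, mul_pow, hx, mul_one]
  rw [sum_range_succ, hx, sub_self, mul_zero, add_zero]
  calc ∑ u ∈ range m, q ^ u * (x ^ u - 1)
      = ∑ u ∈ range m, (q * x) ^ u - ∑ u ∈ range m, q ^ u := by
        rw [← sum_sub_distrib]
        exact sum_congr rfl fun u _ => by ring
    _ = (q ^ m - 1) * (1 / (q * x - 1) - 1 / (q - 1)) := by
        rw [hgeom, geom_sum_eq hq]
        field_simp

theorem sum_range_succ_pow_sub_mul_sub_one {ω : K} (q : K) (hω : ω ^ m = 1) :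
    ∑ u ∈ range (m + 1), q ^ (m - u) * (ω ^ u - 1)
      = ∑ u ∈ range (m + 1), q ^ u * (ω⁻¹ ^ u - 1) := by
  rw [← sum_range_reflect]
  refine sum_congr rfl fun u hu => ?_
  have hum : u ≤ m := Nat.lt_succ_iff.1 (mem_range.1 hu)
  have hω_pow : ω ^ (m - u) = ω⁻¹ ^ u := by
    rcases eq_or_ne ω 0 with rfl | hω0
    · obtain rfl : m = 0 := zero_pow_eq_one₀.1 hω
      obtain rfl : u = 0 := by omega
      simp
    · rw [pow_sub₀ _ hω0 hum, hω, one_mul, inv_pow]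
  rw [Nat.add_sub_cancel, Nat.sub_sub_self hum, hω_pow]

theorem sum_Icc_mul_pow_sub_one {ω : K} (f : ℕ → K) (hω : ω ^ m = 1) :
    ∑ u ∈ Icc 1 (m - 1), f u * (ω ^ u - 1) = ∑ u ∈ range (m + 1), f u * (ω ^ u - 1) := by
  refine sum_subset (fun u hu => ?_) fun u hu hu' => ?_
  · simp only [mem_Icc] at hu
    exact mem_range.2 (by omega)
  · have : u = 0 ∨ u = m := by
      simp only [mem_range, mem_Icc] at hu hu'
      omega
    rcases this with rfl | rfl <;> simp [hω]

end RootOfUnitySums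

theorem mul_ne_one_of_one_lt_norm {R : Type*} [NormedDivisionRing R] {q x : R} (hq : 1 < ‖q‖)
    (hx : ‖x‖ = 1) : q * x ≠ 1 := by
  intro h
  have := congrArg norm h
  rw [norm_mul, hx, mul_one, norm_one] at this
  exact hq.ne' this

theorem stmt_12_general (p : ℝ) (hp : 1 < p) (m : ℕ) (hm : 2 ≤ m)
    (ω : ℂ) (hω : ω ^ m = 1) :
    ∑ u ∈ Finset.Icc 1 (m - 1),
        (((p : ℂ) ^ u + (p : ℂ) ^ (m - u)) / ((p : ℂ) ^ m - 1)) * (ω ^ u - 1)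
      = 1 / ((p : ℂ) * ω - 1) + 1 / ((p : ℂ) * ω⁻¹ - 1) - 2 / ((p : ℂ) - 1) := by
  have hm0 : m ≠ 0 := by omega
  have hp_norm : 1 < ‖(p : ℂ)‖ := by
    rwa [Complex.norm_real, Real.norm_of_nonneg (by linarith)]
  have hω_norm : ‖ω‖ = 1 := Complex.norm_eq_one_of_pow_eq_one hω hm0
  have hp1 : (p : ℂ) ≠ 1 := by simpa using mul_ne_one_of_one_lt_norm hp_norm norm_one
  have hpm : (p : ℂ) ^ m - 1 ≠ 0 := by
    refine sub_ne_zero.2 fun h => ?_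
    have := one_lt_pow₀ hp_norm hm0
    rw [← norm_pow, h, norm_one] at this
    exact lt_irrefl _ this
  have hω_inv : ω⁻¹ ^ m = 1 := by rw [inv_pow, hω, inv_one]
  simp_rw [div_mul_eq_mul_div, ← sum_div]
  rw [sum_Icc_mul_pow_sub_one (fun u => (p : ℂ) ^ u + (p : ℂ) ^ (m - u)) hω]
  simp_rw [add_mul]
  rw [sum_add_distrib, sum_range_succ_pow_sub_mul_sub_one _ hω,
    sum_range_succ_pow_mul_sub_one _ hω (mul_ne_one_of_one_lt_norm hp_norm hω_norm) hp1,
    sum_range_succ_pow_mul_sub_one _ hω_inv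
      (mul_ne_one_of_one_lt_norm hp_norm (by rw [norm_inv, hω_norm, inv_one])) hp1,
    ← mul_add, mul_div_cancel_left₀ _ hpm]
  ring

/-- for `ω` an `m`-th root of unity, `ω ≠ 1`,
`Σ_{u=1}^{m-1} (p^u + p^{m-u})/(p^m-1)·(ω^u - 1) = 1/(pω-1) + 1/(pω⁻¹-1) - 2/(p-1)`. -/
theorem stmt_12 (p : ℝ) (hp : 1 < p) (m : ℕ) (hm : 2 ≤ m)
    (ω : ℂ) (hω : ω ^ m = 1) (hω1 : ω ≠ 1) :
    ∑ u ∈ Finset.Icc 1 (m - 1),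
        (((p : ℂ) ^ u + (p : ℂ) ^ (m - u)) / ((p : ℂ) ^ m - 1)) * (ω ^ u - 1)
      = 1 / ((p : ℂ) * ω - 1) + 1 / ((p : ℂ) * ω⁻¹ - 1) - 2 / ((p : ℂ) - 1) :=
  stmt_12_general p hp m hm ω hω
end

section
/- For p prime and m ≥ 2, the product over all m-th roots of unity ω ≠ 1 of p(p−1)(2 − ω − ω^{−1})/(p² − p(ω + ω^{−1}) + 1) equals m²(p−1)^{m+1} p^{m−1}/(p^m − 1)². -/
/-!
Writing `ω = exp (θ i)`, the factor with angle `θ` is `p (p - 1) |1 - ω|² / |p - ω|²`. Hence the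
product over the nontrivial `m`-th roots of unity `ω` is
`(p (p - 1)) ^ (m - 1) |∏ (1 - ω)|² / |∏ (p - ω)|²`, and evaluating the factorization
`X ^ m - 1 = ∏ (X - ω)` (over all `m`-th roots) gives `∏ (1 - ω) = m` and
`(p - 1) ∏ (p - ω) = p ^ m - 1`.
-/

open Finset Complex Polynomial

namespace IsPrimitiveRoot

variable {R : Type*} [CommRing R] [IsDomain R] {n : ℕ} {μ : R}

lemma prod_Icc_one_sub_pow (hμ : IsPrimitiveRoot μ (n + 1)) :
    ∏ l ∈ Icc 1 n, (1 - μ ^ l) = n + 1 := by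
  rw [← Ico_add_one_right_eq_Icc, ← prod_Ico_add' _ 0 n 1, ← range_eq_Ico,
    hμ.prod_one_sub_pow_eq_order]

lemma sub_one_mul_prod_Icc_sub_pow (hμ : IsPrimitiveRoot μ (n + 1)) (x : R) :
    (x - 1) * ∏ l ∈ Icc 1 n, (x - μ ^ l) = x ^ (n + 1) - 1 := by
  have hroots := congrArg (eval x) (X_pow_sub_C_eq_prod hμ n.succ_pos (one_pow _))
  simp only [eval_sub, eval_pow, eval_X, eval_C, eval_prod, mul_one] at hroots
  rw [hroots, prod_range_eq_mul_Ico _ (Nat.add_one_pos n), pow_zero, Ico_add_one_right_eq_Icc]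

end IsPrimitiveRoot

lemma Complex.normSq_ofReal_sub_exp_mul_I (x θ : ℝ) :
    normSq (x - exp (θ * I)) = x ^ 2 - 2 * x * Real.cos θ + 1 := by
  rw [normSq_apply]
  simp only [sub_re, sub_im, ofReal_re, ofReal_im, exp_ofReal_mul_I_re, exp_ofReal_mul_I_im]
  linear_combination Real.sin_sq_add_cos_sq θ

lemma cos_quotient_eq_normSq_div (p θ : ℝ) :
    2 * p * (p - 1) * (1 - Real.cos θ) / (p ^ 2 - 2 * p * Real.cos θ + 1)
      = p * (p - 1) * normSq (1 - exp (θ * I)) / normSq (p - exp (θ * I)) := by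
  rw [← ofReal_one, normSq_ofReal_sub_exp_mul_I, normSq_ofReal_sub_exp_mul_I]
  ring

lemma IsPrimitiveRoot.normSq_prod_Icc_sub_pow_mul {n : ℕ} {ζ : ℂ} (hζ : IsPrimitiveRoot ζ (n + 1))
    (p : ℝ) :
    normSq (∏ l ∈ Icc 1 n, (p - ζ ^ l)) * (p - 1) ^ 2 = (p ^ (n + 1) - 1) ^ 2 := by
  have h := congrArg normSq (hζ.sub_one_mul_prod_Icc_sub_pow (p : ℂ))
  rw [← ofReal_one, ← ofReal_pow, ← ofReal_sub, ← ofReal_sub, map_mul, normSq_ofReal,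
    normSq_ofReal] at h
  linear_combination h

theorem stmt_13_general (p : ℝ) (m : ℕ) (hm : 2 ≤ m) :
    ∏ l ∈ Finset.Icc 1 (m - 1),
        2 * p * (p - 1) * (1 - Real.cos (2 * Real.pi * l / m)) /
          (p ^ 2 - 2 * p * Real.cos (2 * Real.pi * l / m) + 1)
      = (m : ℝ) ^ 2 * (p - 1) ^ (m + 1) * p ^ (m - 1) / ((p ^ m - 1) ^ 2) := by
  obtain ⟨n, rfl⟩ : ∃ n, m = n + 2 := ⟨m - 2, by omega⟩
  set ζ : ℂ := exp (2 * Real.pi * I / (n + 2 : ℕ))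
  have hζ : IsPrimitiveRoot ζ (n + 1 + 1) := isPrimitiveRoot_exp _ (by omega)
  have hζ_pow (l : ℕ) : ζ ^ l = exp ((2 * Real.pi * l / (n + 2 : ℕ) : ℝ) * I) := by
    rw [← exp_nat_mul]; push_cast; congr 1; ring
  calc _ = ∏ l ∈ Icc 1 (n + 1), p * (p - 1) * normSq (1 - ζ ^ l) / normSq (p - ζ ^ l) :=
        prod_congr rfl fun l _ => by rw [hζ_pow, cos_quotient_eq_normSq_div]
    _ = (p * (p - 1)) ^ (n + 1) * normSq (∏ l ∈ Icc 1 (n + 1), (1 - ζ ^ l))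
          / normSq (∏ l ∈ Icc 1 (n + 1), (p - ζ ^ l)) := by
        simp only [prod_div_distrib, prod_mul_distrib, prod_const, Nat.card_Icc,
          Nat.add_sub_cancel, mul_pow, map_prod]
    _ = _ := by
        rw [hζ.prod_Icc_one_sub_pow, ← Nat.cast_succ, normSq_natCast,
          ← hζ.normSq_prod_Icc_sub_pow_mul p]
        rcases eq_or_ne p 1 with rfl | hp1
        · simp
        · field_simp
          push_cast [mul_pow]
          ring

/-- the product over nontrivial `m`-th roots of unity,
`∏_{ℓ=1}^{m-1} 2p(p-1)(1-cos(2πℓ/m))/(p²-2p·cos(2πℓ/m)+1) = m²(p-1)^{m+1}p^{m-1}/(p^m-1)²`. -/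
theorem stmt_13 (p : ℝ) (hp : 2 ≤ p) (m : ℕ) (hm : 2 ≤ m) :
    ∏ l ∈ Finset.Icc 1 (m - 1),
        2 * p * (p - 1) * (1 - Real.cos (2 * Real.pi * l / m)) /
          (p ^ 2 - 2 * p * Real.cos (2 * Real.pi * l / m) + 1)
      = (m : ℝ) ^ 2 * (p - 1) ^ (m + 1) * p ^ (m - 1) / ((p ^ m - 1) ^ 2) :=
  stmt_13_general p m hm
end

section
/- Let ζ_π(s) = m(p^{s+1} − 2p^s + 1)/((p^s − p)(p−1)^s) for real s (analytic continuation of the eigenvalue zeta function). Then exp(−ζ_π'(0)) = (p/(p−1))^m. -/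
/-! At `s = 0` the numerator of `ζ_π` equals `m (p - 1)` and the denominator `1 - p`, so
`ζ_π(0) = -m`, and the quotient rule gives `ζ_π'(0) = m (log (p - 1) - log p)`;
exponentiating `-ζ_π'(0) = m log (p / (p - 1))` gives the claim. -/

open Real

noncomputable def zetaPi (p m s : ℝ) : ℝ :=
  m * (p ^ (s + 1) - 2 * p ^ s + 1) / ((p ^ s - p) * (p - 1) ^ s)

lemma hasDerivAt_const_rpow_add {a : ℝ} (ha : 0 < a) (c : ℝ) :
    HasDerivAt (fun s : ℝ => a ^ (s + c)) (log a * a ^ c) 0 := by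
  simpa using ((hasDerivAt_id (0 : ℝ)).add_const c).const_rpow ha

lemma hasDerivAt_const_rpow_zero {a : ℝ} (ha : 0 < a) :
    HasDerivAt (fun s : ℝ => a ^ s) (log a) 0 := by
  simpa using hasDerivAt_const_rpow_add ha 0

lemma hasDerivAt_zetaPi_zero {p : ℝ} (hp : 1 < p) (m : ℝ) :
    HasDerivAt (zetaPi p m) (m * (log (p - 1) - log p)) 0 := by
  have hp0 : 0 < p := by linarith
  have hp1 : 0 < p - 1 := by linarith
  have h1p : 1 - p ≠ 0 := (sub_neg.mpr hp).ne
  have hnum : HasDerivAt (fun s : ℝ => m * (p ^ (s + 1) - 2 * p ^ s + 1))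
      (m * (log p * p - 2 * log p)) 0 := by
    simpa using (((hasDerivAt_const_rpow_add hp0 1).sub
      ((hasDerivAt_const_rpow_zero hp0).const_mul 2)).add_const 1).const_mul m
  have hden : HasDerivAt (fun s : ℝ => (p ^ s - p) * (p - 1) ^ s)
      (log p + (1 - p) * log (p - 1)) 0 := by
    simpa using ((hasDerivAt_const_rpow_zero hp0).sub_const p).fun_mul
      (hasDerivAt_const_rpow_zero hp1)
  have hden0 : (p ^ (0 : ℝ) - p) * (p - 1) ^ (0 : ℝ) ≠ 0 := by
    simpa using h1p
  refine (hnum.fun_div hden hden0).congr_deriv ?_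
  simp only [zero_add, rpow_zero, rpow_one, mul_one]
  field_simp
  ring

theorem stmt_15_general (p : ℝ) (hp : 2 < p) (m : ℕ) (d : ℝ)
    (hd : HasDerivAt
      (fun s : ℝ => (m : ℝ) * (p ^ (s + 1) - 2 * p ^ s + 1) / ((p ^ s - p) * (p - 1) ^ s))
      d 0) :
    Real.exp (-d) = (p / (p - 1)) ^ m := by
  have hp1 : 0 < p - 1 := by linarith
  have hd_eq : d = m * (log (p - 1) - log p) :=
    hd.unique (hasDerivAt_zetaPi_zero (by linarith) m)
  have hneg : -d = m * log (p / (p - 1)) := by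
    rw [hd_eq, log_div (by positivity) hp1.ne']
    ring
  rw [hneg, exp_nat_mul, exp_log (by positivity)]

/-- with `ζ_π(s) = m(p^{s+1} - 2p^s + 1)/((p^s - p)(p-1)^s)`,
one has `exp(-ζ_π'(0)) = (p/(p-1))^m`. -/
theorem stmt_15 (p : ℝ) (hp : 2 < p) (m : ℕ) (hm : 1 ≤ m) (d : ℝ)
    (hd : HasDerivAt
      (fun s : ℝ => (m : ℝ) * (p ^ (s + 1) - 2 * p ^ s + 1) / ((p ^ s - p) * (p - 1) ^ s))
      d 0) :
    Real.exp (-d) = (p / (p - 1)) ^ m :=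
  stmt_15_general p hp m d hd
end
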